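/- arXiv:1301.5316 — 3 statements merged into one kernel-verified Lean document; each statement's English description precedes it below -/
import Mathlib

section
/- Let g : (ℝⁿ \ {0}) → Mat(n,ℝ) be smooth symmetric with Σ_j (∂g^{ij}/∂p_k) p_j = 0. If X, Y : ℝⁿ \ {0} → ℝⁿ are smooth with Σ_{i,j} g^{ij} X_i p_j = 0 and Σ_{i,j} g^{ij} Y_i p_j = 0 everywhere, then their Lie bracket [X,Y] (with components Σ_k (X_k ∂Y_i/∂p_k − Y_k ∂X_i/∂p_k)) also satisfies Σ_{i,j} g^{ij} [X,Y]_i p_j = 0. Hence the vertical Liouville distribution L_{C*} is integrable. -/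
/-- Partial derivative of `f` with respect to the `i`-th coordinate at `p`. -/
noncomputable def pd {n : ℕ} (i : Fin n) (f : (Fin n → ℝ) → ℝ) (p : Fin n → ℝ) : ℝ :=
  fderiv ℝ f p (Pi.single i 1)

/-- The `i`-th component of the Lie bracket of two vertical vector fields
`X = X_k ∂/∂p_k`, `Y = Y_k ∂/∂p_k` on a cotangent fiber. -/
noncomputable def lieBr {n : ℕ} (X Y : (Fin n → ℝ) → Fin n → ℝ) (i : Fin n)
    (p : Fin n → ℝ) : ℝ :=
  ∑ k, (X p k * pd k (fun q => Y q i) p - Y p k * pd k (fun q => X q i) p)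

lemma key {n : ℕ} (g : (Fin n → ℝ) → Matrix (Fin n) (Fin n) ℝ)
    (hg : ∀ i j : Fin n, ContDiffOn ℝ (⊤ : ℕ∞) (fun p => g p i j) {p : Fin n → ℝ | p ≠ 0})
    (hg0 : ∀ p : Fin n → ℝ, p ≠ 0 → ∀ i k : Fin n,
      ∑ j, pd k (fun q => g q i j) p * p j = 0)
    (X : (Fin n → ℝ) → Fin n → ℝ)
    (hX : ∀ i : Fin n, ContDiffOn ℝ (⊤ : ℕ∞) (fun p => X p i) {p : Fin n → ℝ | p ≠ 0})
    (hXL : ∀ p : Fin n → ℝ, p ≠ 0 → ∑ i, ∑ j, g p i j * X p i * p j = 0)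
    (p : Fin n → ℝ) (hp : p ≠ 0) (k : Fin n) :
    ∑ i, ∑ j, g p i j * pd k (fun q => X q i) p * p j = - ∑ i, g p i k * X p i := by
  have hU : IsOpen {q : Fin n → ℝ | q ≠ 0} := isOpen_compl_singleton
  have hmem : {q : Fin n → ℝ | q ≠ 0} ∈ nhds p := hU.mem_nhds hp
  have hgd : ∀ i j, DifferentiableAt ℝ (fun q => g q i j) p := fun i j =>
    ((hg i j).contDiffAt hmem).differentiableAt (by simp)
  have hXd : ∀ i, DifferentiableAt ℝ (fun q => X q i) p := fun i =>
    ((hX i).contDiffAt hmem).differentiableAt (by simp)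
  set v : Fin n → ℝ := Pi.single k 1 with hv
  -- derivative of each term
  have hterm : ∀ i j : Fin n, HasFDerivAt (fun q => g q i j * X q i * q j)
      ((g p i j * X p i) • (ContinuousLinearMap.proj j : (Fin n → ℝ) →L[ℝ] ℝ) +
        (p j) • ((g p i j) • fderiv ℝ (fun q => X q i) p +
          (X p i) • fderiv ℝ (fun q => g q i j) p)) p := by
    intro i j
    have h1 := (hgd i j).hasFDerivAt
    have h2 := (hXd i).hasFDerivAt
    have h3 : HasFDerivAt (fun q : Fin n → ℝ => q j)
        (ContinuousLinearMap.proj j : (Fin n → ℝ) →L[ℝ] ℝ) p := by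
      exact (ContinuousLinearMap.proj j : (Fin n → ℝ) →L[ℝ] ℝ).hasFDerivAt
    exact (h1.mul h2).mul h3
  have hF : HasFDerivAt (fun q => ∑ i, ∑ j, g q i j * X q i * q j)
      (∑ i, ∑ j, ((g p i j * X p i) • (ContinuousLinearMap.proj j : (Fin n → ℝ) →L[ℝ] ℝ) +
        (p j) • ((g p i j) • fderiv ℝ (fun q => X q i) p +
          (X p i) • fderiv ℝ (fun q => g q i j) p))) p := by
    apply HasFDerivAt.fun_sum
    intro i _
    exact HasFDerivAt.fun_sum fun j _ => hterm i j
  have hzero : (fun q => ∑ i, ∑ j, g q i j * X q i * q j) =ᶠ[nhds p]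
      (fun _ => (0 : ℝ)) := by
    filter_upwards [hmem] with q hq using hXL q hq
  have hf0 : fderiv ℝ (fun q => ∑ i, ∑ j, g q i j * X q i * q j) p = 0 := by
    rw [hzero.fderiv_eq]
    exact fderiv_const_apply 0
  have hE : (∑ i, ∑ j, ((g p i j * X p i) • (ContinuousLinearMap.proj j : (Fin n → ℝ) →L[ℝ] ℝ) +
        (p j) • ((g p i j) • fderiv ℝ (fun q => X q i) p +
          (X p i) • fderiv ℝ (fun q => g q i j) p))) v = 0 := by
    rw [← hF.fderiv, hf0]; rfl
  -- evaluate the continuous linear map sum at v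
  have hE2 : ∑ i, ∑ j, ((g p i j * X p i) * v j +
      p j * (g p i j * pd k (fun q => X q i) p +
        X p i * pd k (fun q => g q i j) p)) = 0 := by
    rw [← hE]
    simp [ContinuousLinearMap.sum_apply, pd, hv, mul_add]
  have hvj : ∀ j : Fin n, v j = if j = k then 1 else 0 := by
    intro j; rw [hv]; simp [Pi.single_apply]
  have hE3 : ∀ i : Fin n, ∑ j, ((g p i j * X p i) * v j +
      p j * (g p i j * pd k (fun q => X q i) p +
        X p i * pd k (fun q => g q i j) p)) =
      g p i k * X p i + (∑ j, g p i j * pd k (fun q => X q i) p * p j) +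
        X p i * ∑ j, pd k (fun q => g q i j) p * p j := by
    intro i
    have hA : ∑ j, g p i j * X p i * v j = g p i k * X p i := by
      simp [hvj, mul_ite]
    have hB : ∑ j, p j * (g p i j * pd k (fun q => X q i) p +
        X p i * pd k (fun q => g q i j) p) =
        (∑ j, g p i j * pd k (fun q => X q i) p * p j) +
          X p i * ∑ j, pd k (fun q => g q i j) p * p j := by
      rw [Finset.mul_sum, ← Finset.sum_add_distrib]
      exact Finset.sum_congr rfl fun j _ => by ring
    rw [Finset.sum_add_distrib, hA, hB, add_assoc]
  rw [Finset.sum_congr rfl fun i _ => hE3 i] at hE2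
  rw [Finset.sum_add_distrib, Finset.sum_add_distrib] at hE2
  have h4 : ∑ i, X p i * ∑ j, pd k (fun q => g q i j) p * p j = 0 := by
    apply Finset.sum_eq_zero
    intro i _
    rw [hg0 p hp i k, mul_zero]
  rw [h4, add_zero] at hE2
  linarith

theorem stmt6 {n : ℕ} (g : (Fin n → ℝ) → Matrix (Fin n) (Fin n) ℝ)
    (hg : ∀ i j : Fin n, ContDiffOn ℝ (⊤ : ℕ∞) (fun p => g p i j) {p : Fin n → ℝ | p ≠ 0})
    (hsymm : ∀ p : Fin n → ℝ, ∀ i j, g p i j = g p j i)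
    (hg0 : ∀ p : Fin n → ℝ, p ≠ 0 → ∀ i k : Fin n,
      ∑ j, pd k (fun q => g q i j) p * p j = 0)
    (X Y : (Fin n → ℝ) → Fin n → ℝ)
    (hX : ∀ i : Fin n, ContDiffOn ℝ (⊤ : ℕ∞) (fun p => X p i) {p : Fin n → ℝ | p ≠ 0})
    (hY : ∀ i : Fin n, ContDiffOn ℝ (⊤ : ℕ∞) (fun p => Y p i) {p : Fin n → ℝ | p ≠ 0})
    (hXL : ∀ p : Fin n → ℝ, p ≠ 0 → ∑ i, ∑ j, g p i j * X p i * p j = 0)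
    (hYL : ∀ p : Fin n → ℝ, p ≠ 0 → ∑ i, ∑ j, g p i j * Y p i * p j = 0) :
    ∀ p : Fin n → ℝ, p ≠ 0 →
      ∑ i, ∑ j, g p i j * lieBr X Y i p * p j = 0 := by
  intro p hp
  have hkX := key g hg hg0 X hX hXL p hp
  have hkY := key g hg hg0 Y hY hYL p hp
  calc ∑ i, ∑ j, g p i j * lieBr X Y i p * p j
      = ∑ i, ∑ j, ∑ k, (X p k * (g p i j * pd k (fun q => Y q i) p * p j)
          - Y p k * (g p i j * pd k (fun q => X q i) p * p j)) := by
        refine Finset.sum_congr rfl fun i _ => Finset.sum_congr rfl fun j _ => ?_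
        rw [lieBr, Finset.mul_sum, Finset.sum_mul]
        exact Finset.sum_congr rfl fun k _ => by ring
    _ = ∑ i, ∑ k, ∑ j, (X p k * (g p i j * pd k (fun q => Y q i) p * p j)
          - Y p k * (g p i j * pd k (fun q => X q i) p * p j)) :=
        Finset.sum_congr rfl fun i _ => Finset.sum_comm
    _ = ∑ k, ∑ i, ∑ j, (X p k * (g p i j * pd k (fun q => Y q i) p * p j)
          - Y p k * (g p i j * pd k (fun q => X q i) p * p j)) := Finset.sum_comm
    _ = ∑ k, (X p k * (∑ i, ∑ j, g p i j * pd k (fun q => Y q i) p * p j)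
          - Y p k * (∑ i, ∑ j, g p i j * pd k (fun q => X q i) p * p j)) := by
        refine Finset.sum_congr rfl fun k _ => ?_
        rw [Finset.mul_sum, Finset.mul_sum, ← Finset.sum_sub_distrib]
        refine Finset.sum_congr rfl fun i _ => ?_
        rw [Finset.mul_sum, Finset.mul_sum, ← Finset.sum_sub_distrib]
    _ = ∑ k, (X p k * (- ∑ i, g p i k * Y p i) - Y p k * (- ∑ i, g p i k * X p i)) := by
        refine Finset.sum_congr rfl fun k _ => ?_
        rw [hkY k, hkX k]
    _ = (∑ k, ∑ i, g p i k * X p i * Y p k) - ∑ k, ∑ i, g p i k * Y p i * X p k := by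
        rw [← Finset.sum_sub_distrib]
        refine Finset.sum_congr rfl fun k _ => ?_
        rw [← Finset.sum_mul, ← Finset.sum_mul]
        ring
    _ = 0 := by
        rw [sub_eq_zero, Finset.sum_comm]
        refine Finset.sum_congr rfl fun k _ => Finset.sum_congr rfl fun i _ => ?_
        rw [hsymm p i k]; ring
end

section
/- Let t : ℝⁿ \ {0} → ℝⁿ be smooth with Σ_i p_i t^i(p) = 1 and ∂t^i/∂p_j = −2t^it^j + g^{ij}/K² (g symmetric). Define vector fields V^i = ∂/∂p_i − t^i C* with C* = p_k ∂/∂p_k. Then the Lie brackets satisfy [V^i, V^j] = t^i V^j − t^j V^i for all i,j. -/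
/-- The `k`-th component of the vertical vector field `V^i = ∂/∂p_i − t^i C*`,
namely `(V^i)_k = δ_{ik} − t^i p_k`. -/
noncomputable def Vc {n : ℕ} (t : (Fin n → ℝ) → Fin n → ℝ) (i k : Fin n)
    (p : Fin n → ℝ) : ℝ :=
  (if i = k then (1 : ℝ) else 0) - t p i * p k

lemma diffAt_t {n : ℕ} {t : (Fin n → ℝ) → Fin n → ℝ}
    (ht : ∀ i : Fin n, ContDiffOn ℝ (⊤ : ℕ∞) (fun p => t p i) {p : Fin n → ℝ | p ≠ 0})
    {p : Fin n → ℝ} (hp : p ≠ 0) (i : Fin n) :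
    DifferentiableAt ℝ (fun q => t q i) p := by
  have hopen : IsOpen {q : Fin n → ℝ | q ≠ 0} := isOpen_compl_singleton
  exact ((ht i).contDiffAt (hopen.mem_nhds hp)).differentiableAt (by simp)

lemma fderiv_proj {n : ℕ} (k : Fin n) (p : Fin n → ℝ) :
    fderiv ℝ (fun q : Fin n → ℝ => q k) p
      = (ContinuousLinearMap.proj k : (Fin n → ℝ) →L[ℝ] ℝ) :=
  (ContinuousLinearMap.proj k : (Fin n → ℝ) →L[ℝ] ℝ).fderiv

lemma pd_Vc {n : ℕ} {t : (Fin n → ℝ) → Fin n → ℝ}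
    (ht : ∀ i : Fin n, ContDiffOn ℝ (⊤ : ℕ∞) (fun p => t p i) {p : Fin n → ℝ | p ≠ 0})
    {p : Fin n → ℝ} (hp : p ≠ 0) (l j k : Fin n) :
    pd l (fun q => Vc t j k q) p
      = -(pd l (fun q => t q j) p * p k + t p j * (if k = l then 1 else 0)) := by
  have h1 : DifferentiableAt ℝ (fun q => t q j) p := diffAt_t ht hp j
  have h2 : DifferentiableAt ℝ (fun q : Fin n → ℝ => q k) p :=
    (ContinuousLinearMap.proj k : (Fin n → ℝ) →L[ℝ] ℝ).differentiableAt
  unfold pd Vc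
  rw [fderiv_fun_sub (g := fun q => t q j * q k) (differentiableAt_const _) (h1.mul h2), fderiv_fun_mul h1 h2]
  simp [fderiv_proj, Pi.single_apply]
  ring

theorem stmt13 {n : ℕ} (t : (Fin n → ℝ) → Fin n → ℝ)
    (K : (Fin n → ℝ) → ℝ) (g : (Fin n → ℝ) → Matrix (Fin n) (Fin n) ℝ)
    (ht : ∀ i : Fin n, ContDiffOn ℝ (⊤ : ℕ∞) (fun p => t p i) {p : Fin n → ℝ | p ≠ 0})
    (hK : ∀ p : Fin n → ℝ, p ≠ 0 → K p ≠ 0)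
    (hsymm : ∀ p : Fin n → ℝ, ∀ i j, g p i j = g p j i)
    (h1 : ∀ p : Fin n → ℝ, p ≠ 0 → ∑ i, p i * t p i = 1)
    (hd : ∀ p : Fin n → ℝ, p ≠ 0 → ∀ i j : Fin n,
      pd j (fun q => t q i) p = -2 * t p i * t p j + g p i j / (K p) ^ 2) :
    ∀ p : Fin n → ℝ, p ≠ 0 → ∀ i j k : Fin n,
      ∑ l, (Vc t i l p * pd l (fun q => Vc t j k q) p
            - Vc t j l p * pd l (fun q => Vc t i k q) p)
        = t p i * Vc t j k p - t p j * Vc t i k p := by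
  intro p hp i j k
  have hKp := hK p hp
  have hKp2 : (K p) ^ 2 ≠ 0 := pow_ne_zero _ hKp
  -- derivative of the constraint ∑ p_i t^i = 1 gives ∑ p_l g_{lj} = K² t^j
  have hSg : ∀ j : Fin n, ∑ l, p l * g p l j = (K p) ^ 2 * t p j := by
    intro j
    have hopen : IsOpen {q : Fin n → ℝ | q ≠ 0} := isOpen_compl_singleton
    have hmem : {q : Fin n → ℝ | q ≠ 0} ∈ nhds p := hopen.mem_nhds hp
    have heq : (fun q => ∑ i, q i * t q i) =ᶠ[nhds p] fun _ => (1 : ℝ) :=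
      Filter.eventually_of_mem hmem fun q hq => h1 q hq
    have hdiff : ∀ i : Fin n, DifferentiableAt ℝ (fun q : Fin n → ℝ => q i * t q i) p :=
      fun i => ((ContinuousLinearMap.proj i :
        (Fin n → ℝ) →L[ℝ] ℝ).differentiableAt).mul (diffAt_t ht hp i)
    have hz : fderiv ℝ (fun q => ∑ i, q i * t q i) p = 0 := by
      rw [heq.fderiv_eq]; exact fderiv_const_apply 1
    have hsum : fderiv ℝ (fun q => ∑ i, q i * t q i) p
        = ∑ i, fderiv ℝ (fun q : Fin n → ℝ => q i * t q i) p :=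
      fderiv_fun_sum fun i _ => hdiff i
    have hz2 : (0 : ℝ) = ∑ i, (p i * pd j (fun q => t q i) p
        + t p i * (if i = j then 1 else 0)) := by
      have h0 := congrArg (fun L => L (Pi.single j 1)) (hz.symm.trans hsum)
      simp only [ContinuousLinearMap.zero_apply, ContinuousLinearMap.sum_apply] at h0
      refine h0.trans (Finset.sum_congr rfl fun i _ => ?_)
      have hpr : DifferentiableAt ℝ (fun q : Fin n → ℝ => q i) p :=
        (ContinuousLinearMap.proj i : (Fin n → ℝ) →L[ℝ] ℝ).differentiableAt
      rw [fderiv_fun_mul hpr (diffAt_t ht hp i)]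
      simp [pd, fderiv_proj, Pi.single_apply]
    have hz3 : ∑ i, (p i * pd j (fun q => t q i) p
          + t p i * (if i = j then 1 else 0))
        = ∑ i, ((p i * t p i) * (-2 * t p j)
          + (p i * g p i j) * (1 / (K p) ^ 2) + (if i = j then t p i else 0)) := by
      refine Finset.sum_congr rfl fun i _ => ?_
      rw [hd p hp i j]
      by_cases h : i = j <;> simp [h] <;> ring
    have hz4 := hz2.trans hz3
    rw [Finset.sum_add_distrib, Finset.sum_add_distrib, ← Finset.sum_mul,
      ← Finset.sum_mul, h1 p hp, Finset.sum_ite_eq' Finset.univ j] at hz4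
    simp only [Finset.mem_univ, if_true] at hz4
    field_simp at hz4 ⊢
    linarith
  -- the key sum
  have key : ∀ i j : Fin n,
      ∑ l, Vc t i l p * pd l (fun q => Vc t j k q) p
        = 2 * t p i * t p j * p k - g p j i * p k / (K p) ^ 2
          - t p j * (if k = i then 1 else 0) := by
    intro i j
    have step : ∑ l, Vc t i l p * pd l (fun q => Vc t j k q) p
        = ∑ l, ((if i = l then
              (-((-2 * t p j * t p l + g p j l / (K p) ^ 2) * p k
                + t p j * (if k = l then 1 else 0))) else 0)
            + (p l * t p l) * (-2 * t p i * t p j * p k)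
            + (p l * g p j l) * (t p i * p k / (K p) ^ 2)
            + (if k = l then p l else 0) * (t p i * t p j)) := by
      refine Finset.sum_congr rfl fun l _ => ?_
      rw [pd_Vc ht hp l j k, hd p hp j l]
      simp only [Vc]
      by_cases h1' : i = l <;> by_cases h2' : k = l <;> simp [h1', h2'] <;> ring
    rw [step, Finset.sum_add_distrib, Finset.sum_add_distrib, Finset.sum_add_distrib,
      ← Finset.sum_mul, ← Finset.sum_mul, ← Finset.sum_mul, h1 p hp,
      Finset.sum_ite_eq Finset.univ i, Finset.sum_ite_eq Finset.univ k]
    have hg : ∑ l, p l * g p j l = (K p) ^ 2 * t p j := by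
      rw [← hSg j]
      exact Finset.sum_congr rfl fun l _ => by rw [hsymm p j l]
    rw [hg]
    simp only [Finset.mem_univ, if_true]
    field_simp
    ring
  rw [Finset.sum_sub_distrib, key i j, key j i]
  simp only [Vc]
  rw [hsymm p i j]
  have e1 : (if k = i then (1 : ℝ) else 0) = (if i = k then 1 else 0) := by
    rcases eq_or_ne i k with h | h
    · simp [h]
    · rw [if_neg h.symm, if_neg h]
  have e2 : (if k = j then (1 : ℝ) else 0) = (if j = k then 1 else 0) := by
    rcases eq_or_ne j k with h | h
    · simp [h]
    · rw [if_neg h.symm, if_neg h]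
  rw [e1, e2]
  ring
end

section
/- On a leaf F_V of the vertical foliation with Levi-Civita connection ∇ whose Christoffel symbols satisfy C_i^{jk} p_j = 0, the vector field C*/K satisfies ∇_X (C*/K) = (1/K) PX for every vector field X on F_V, where P is the orthogonal projection onto the orthogonal complement of C*. -/
/-- `p^i = (1/2) ∂(K²)/∂p_i`. -/
noncomputable def pUpK {n : ℕ} (K : (Fin n → ℝ) → ℝ) (i : Fin n) (p : Fin n → ℝ) : ℝ :=
  (1 / 2) * pd i (fun q => (K q) ^ 2) p

theorem stmt16 {n : ℕ} (K : (Fin n → ℝ) → ℝ)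
    (hK : ContDiffOn ℝ (⊤ : ℕ∞) K {p : Fin n → ℝ | p ≠ 0})
    (hKpos : ∀ p : Fin n → ℝ, p ≠ 0 → 0 < K p)
    (hhom : ∀ p : Fin n → ℝ, p ≠ 0 → ∀ l : ℝ, 0 < l → K (l • p) = l * K p)
    (Chr : Fin n → Fin n → Fin n → (Fin n → ℝ) → ℝ)
    (hChr : ∀ p : Fin n → ℝ, p ≠ 0 → ∀ k i : Fin n, ∑ j, Chr k i j p * p j = 0) :
    ∀ p : Fin n → ℝ, p ≠ 0 → ∀ X : Fin n → ℝ, ∀ k : Fin n,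
      (∑ i, X i * ((if i = k then (1 : ℝ) else 0) * K p - p k * pd i K p) / (K p) ^ 2)
        + ∑ i, ∑ j, X i * p j * Chr k i j p / K p
      = ∑ i, (X i / K p) * ((if i = k then (1 : ℝ) else 0) - p k * pUpK K i p / (K p) ^ 2) := by
  intro p hp X k
  have hopen : IsOpen {q : Fin n → ℝ | q ≠ 0} := isOpen_compl_singleton
  have hmem : {q : Fin n → ℝ | q ≠ 0} ∈ nhds p := hopen.mem_nhds hp
  have hdiff : DifferentiableAt ℝ K p :=
    ((hK.contDiffAt hmem).differentiableAt (by simp))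
  have hKne : K p ≠ 0 := (hKpos p hp).ne'
  -- pUpK = K p * pd i K p
  have hpUpK : ∀ i, pUpK K i p = K p * pd i K p := by
    intro i
    have h2 : HasFDerivAt (fun q => K q * K q)
        (K p • fderiv ℝ K p + K p • fderiv ℝ K p) p :=
      hdiff.hasFDerivAt.mul hdiff.hasFDerivAt
    have heq : (fun q => (K q) ^ 2) = fun q => K q * K q := by funext q; ring
    unfold pUpK pd
    rw [heq, h2.fderiv]
    simp
    ring
  -- second sum is zero
  have hzero : (∑ i, ∑ j, X i * p j * Chr k i j p / K p) = 0 := by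
    refine Finset.sum_eq_zero fun i _ => ?_
    have := hChr p hp k i
    calc (∑ j, X i * p j * Chr k i j p / K p)
        = (X i / K p) * ∑ j, Chr k i j p * p j := by
          rw [Finset.mul_sum]; exact Finset.sum_congr rfl fun j _ => by ring
      _ = 0 := by rw [this, mul_zero]
  rw [hzero, add_zero]
  refine Finset.sum_congr rfl fun i _ => ?_
  rw [hpUpK i]
  by_cases h : i = k <;> field_simp [h] <;> ring
end
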